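/- Let ν∈(−1,1/2], κ>0, γ>0 with γ≠1, and β∈ℝ with β≠0, β≠1 and β(1+ν) ≤ 3γ(1−ν). Define ŵ:(0,∞)²→ℝ by ŵ(δ,η)=κ[η^{γ−1}((3(1−ν)/(β(β−1)(1+ν)))(δ/η)^{β−1}+(3(1−ν)/(β(1+ν))−1/γ)(δ/η)^{−1}+1/(γ−1)−3(1−ν)/((β−1)(1+ν)))+δ^{−1}/γ−1/(γ−1)]. Then ŵ(δ,η) ≥ 0 for all η ≥ δ > 0. Moreover ŵ(δ,η) ≥ 0 for all δ,η>0 if and only if β ≥ min(γ, 3γ(1−ν)/(1+ν)−2(1−2ν)/(1+ν)). -/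

import Mathlib

/-!
With `a = 3(1-ν)/(1+ν)` and `G_s(x) = (x^s - s x + s - 1)/(s(s-1))` one has
`ŵ(δ,η) = κ/δ · (G_γ(δ) + η^γ (a G_β(δ/η) - G_γ(δ/η)))`, so everything hinges on comparing
`a G_β` with `G_γ`. The secant slope `(x^r - 1)/r` of the convex function `r ↦ x^r` is increasing
in `r`; for `r = s - 1` it is `∂ₓ G_s(x)`, and `s G_s(x) = 1 - x + x (x^(s-1) - 1)/(s - 1)`.
Hence `s G_s(x)` is increasing in `s` (which also gives `G_s ≥ 0`), and `G_s(x)` is decreasing in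
`s` for `x ≤ 1`. With the reflection `G_s(x) = x G_{1-s}(1/x)` this yields `G_γ ≤ a G_β` in each
admissible case. Conversely, if `β` lies below both bounds, `ŵ(1,η) < 0` for small `η`: its
leading term as `η → 0` is `-κ/(γ(γ-1))` when `γ > 1`, and `κ η^(γ-1) (1/(γ-1) - a/(β-1))` when
`γ < 1`.
-/

open Real Set Filter Topology

noncomputable section

/-- The stored energy function of the polytropic elastic constitutive function with
bulk modulus `κ`, Poisson ratio `ν`, polytropic exponent `γ ≠ 1` and shear exponent
`β ≠ 0, 1`. -/
def wPoly (κ ν γ β δ η : ℝ) : ℝ :=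
  κ * (η ^ (γ - 1) *
      (3 * (1 - ν) / (β * (β - 1) * (1 + ν)) * (δ / η) ^ (β - 1)
        + (3 * (1 - ν) / (β * (1 + ν)) - 1 / γ) * (δ / η)⁻¹
        + 1 / (γ - 1) - 3 * (1 - ν) / ((β - 1) * (1 + ν)))
    + δ⁻¹ / γ - 1 / (γ - 1))

def powerDiv (s x : ℝ) : ℝ := (x ^ s - s * x + s - 1) / (s * (s - 1))

theorem rpow_sub_one_div_le_of_le {x r q : ℝ} (hx : 0 < x) (hr : r ≠ 0) (hq : q ≠ 0)
    (hrq : r ≤ q) : (x ^ r - 1) / r ≤ (x ^ q - 1) / q := by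
  simpa [Real.rpow_zero] using
    (convexOn_rpow_left hx).secant_mono (mem_univ 0) (mem_univ r) (mem_univ q) hr hq hrq

theorem mul_powerDiv_eq {s x : ℝ} (hs : s ≠ 1) (hx : 0 < x) :
    s * powerDiv s x = 1 - x + x * ((x ^ (s - 1) - 1) / (s - 1)) := by
  have hs1 : s - 1 ≠ 0 := sub_ne_zero.2 hs
  rcases eq_or_ne s 0 with rfl | hs0
  · rw [zero_sub, Real.rpow_neg_one]
    field_simp
    ring
  rw [powerDiv, Real.rpow_sub_one hx.ne']
  field_simp
  ring

theorem mul_powerDiv_le_mul_powerDiv {s s' x : ℝ} (hx : 0 < x) (hs : s ≠ 1) (hs' : s' ≠ 1)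
    (h : s ≤ s') : s * powerDiv s x ≤ s' * powerDiv s' x := by
  rw [mul_powerDiv_eq hs hx, mul_powerDiv_eq hs' hx]
  have := rpow_sub_one_div_le_of_le hx (sub_ne_zero.2 hs) (sub_ne_zero.2 hs')
    (by linarith : s - 1 ≤ s' - 1)
  gcongr

theorem powerDiv_nonneg {s x : ℝ} (hx : 0 < x) (hs : s ≠ 1) : 0 ≤ powerDiv s x := by
  -- compare with `s = 0`, where `0 * powerDiv 0 x = 0` (and `powerDiv 0 x = 0` is a junk value)
  have h := mul_powerDiv_le_mul_powerDiv hx (s := 0) (s' := s) zero_ne_one hs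
  have h' := mul_powerDiv_le_mul_powerDiv hx (s := s) (s' := 0) hs zero_ne_one
  rw [zero_mul] at h h'
  rcases lt_trichotomy s 0 with hs0 | rfl | hs0
  · exact nonneg_of_mul_nonpos_right (h' hs0.le) hs0
  · simp [powerDiv]
  · exact nonneg_of_mul_nonneg_right (h hs0.le) hs0

theorem hasDerivAt_powerDiv {s x : ℝ} (hs0 : s ≠ 0) (hs1 : s ≠ 1) (hx : 0 < x) :
    HasDerivAt (powerDiv s) ((x ^ (s - 1) - 1) / (s - 1)) x := by
  refine (((((Real.hasDerivAt_rpow_const (p := s) (Or.inl hx.ne')).sub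
    ((hasDerivAt_id' x).const_mul s)).add_const s).sub_const 1).div_const
      (s * (s - 1))).congr_deriv ?_
  field_simp [sub_ne_zero.2 hs1]

theorem powerDiv_le_powerDiv_of_le_one {s s' x : ℝ} (hs0 : s ≠ 0) (hs1 : s ≠ 1) (hs'0 : s' ≠ 0)
    (hs'1 : s' ≠ 1) (h : s ≤ s') (hx : 0 < x) (hx1 : x ≤ 1) : powerDiv s' x ≤ powerDiv s x := by
  have hderiv : ∀ y ∈ Ioi (0 : ℝ), HasDerivAt (fun y => powerDiv s y - powerDiv s' y)
      ((y ^ (s - 1) - 1) / (s - 1) - (y ^ (s' - 1) - 1) / (s' - 1)) y :=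
    fun y hy => (hasDerivAt_powerDiv hs0 hs1 hy).sub (hasDerivAt_powerDiv hs'0 hs'1 hy)
  have hanti : AntitoneOn (fun y => powerDiv s y - powerDiv s' y) (Ioi 0) :=
    antitoneOn_of_hasDerivWithinAt_nonpos (convex_Ioi 0)
      (fun y hy => (hderiv y hy).continuousAt.continuousWithinAt)
      (fun y hy => (hderiv y (interior_subset hy)).hasDerivWithinAt) fun y hy =>
      sub_nonpos.2 (rpow_sub_one_div_le_of_le (interior_subset hy) (sub_ne_zero.2 hs1)
        (sub_ne_zero.2 hs'1) (by linarith))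
  simpa [powerDiv] using hanti hx (mem_Ioi.2 one_pos) hx1

theorem powerDiv_eq_mul_powerDiv_inv (s : ℝ) {x : ℝ} (hx : 0 < x) :
    powerDiv s x = x * powerDiv (1 - s) x⁻¹ := by
  rw [powerDiv, powerDiv, Real.inv_rpow hx.le, ← Real.rpow_neg hx.le, neg_sub,
    Real.rpow_sub_one hx.ne']
  field_simp
  ring

theorem wPoly_eq_powerDiv {κ ν γ β δ η : ℝ} (hγ0 : γ ≠ 0) (hγ1 : γ ≠ 1) (hβ0 : β ≠ 0)
    (hβ1 : β ≠ 1) (hδ : 0 < δ) (hη : 0 < η) :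
    wPoly κ ν γ β δ η = κ / δ * (powerDiv γ δ +
      η ^ γ * (3 * (1 - ν) / (1 + ν) * powerDiv β (δ / η) - powerDiv γ (δ / η))) := by
  obtain ⟨t, ht, rfl⟩ : ∃ t, 0 < t ∧ δ = t * η := ⟨δ / η, div_pos hδ hη, by field_simp⟩
  have hγ1' : γ - 1 ≠ 0 := sub_ne_zero.2 hγ1
  have hβ1' : β - 1 ≠ 0 := sub_ne_zero.2 hβ1
  rw [wPoly, powerDiv, powerDiv, powerDiv, mul_div_cancel_right₀ t hη.ne',
    Real.rpow_sub_one hη.ne', Real.rpow_sub_one ht.ne', Real.mul_rpow ht.le hη.le]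
  field_simp
  ring

theorem wPoly_one_left {κ ν γ β η : ℝ} (hη : 0 < η) :
    wPoly κ ν γ β 1 η = κ * (3 * (1 - ν) / (β * (β - 1) * (1 + ν)) * η ^ (γ - β)
      + (3 * (1 - ν) / (β * (1 + ν)) - 1 / γ) * η ^ γ
      + (1 / (γ - 1) - 3 * (1 - ν) / ((β - 1) * (1 + ν))) * η ^ (γ - 1)
      + (1 / γ - 1 / (γ - 1))) := by
  have hβ : η ^ (γ - 1) * (1 / η) ^ (β - 1) = η ^ (γ - β) := by
    rw [one_div, Real.inv_rpow hη.le, ← Real.rpow_neg hη.le, ← Real.rpow_add hη]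
    ring_nf
  have hγ : η ^ (γ - 1) * (1 / η)⁻¹ = η ^ γ := by
    rw [one_div, inv_inv, Real.rpow_sub_one hη.ne', div_mul_cancel₀ _ hη.ne']
  rw [wPoly, inv_one, ← hβ, ← hγ]
  ring

theorem exists_gt_lt_zero_of_continuousAt {f : ℝ → ℝ} {a : ℝ} (hf : ContinuousAt f a)
    (ha : f a < 0) : ∃ x > a, f x < 0 :=
  (((hf.eventually_lt continuousAt_const ha).filter_mono nhdsWithin_le_nhds).and
    (self_mem_nhdsWithin (s := Ioi a))).exists.imp fun _ h => ⟨h.2, h.1⟩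

theorem exists_wPoly_one_neg {κ ν γ β : ℝ} (hκ : 0 < κ) (hγ : 0 < γ) (hγ1 : γ ≠ 1)
    (hβγ : β < γ) (hβa : β < 3 * (1 - ν) / (1 + ν) * (γ - 1) + 1) :
    ∃ η > 0, wPoly κ ν γ β 1 η < 0 := by
  set A := 3 * (1 - ν) / (β * (β - 1) * (1 + ν))
  set B := 3 * (1 - ν) / (β * (1 + ν)) - 1 / γ
  set C := 1 / (γ - 1) - 3 * (1 - ν) / ((β - 1) * (1 + ν))
  set E := 1 / γ - 1 / (γ - 1)
  rcases hγ1.lt_or_gt with hγ1 | hγ1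
  · have hC : C < 0 := by
      have hC' : C = (β - 1 - 3 * (1 - ν) / (1 + ν) * (γ - 1)) / ((γ - 1) * (β - 1)) := by
        rw [show C = 1 / (γ - 1) - 3 * (1 - ν) / (1 + ν) / (β - 1) by
          rw [div_div, mul_comm (1 + ν)]]
        field_simp [(by linarith : γ - 1 ≠ 0), (by linarith : β - 1 ≠ 0)]
      rw [hC']
      exact div_neg_of_neg_of_pos (by linarith) (mul_pos_of_neg_of_neg (by linarith) (by linarith))
    obtain ⟨η, hη, hneg⟩ := exists_gt_lt_zero_of_continuousAt (a := 0)
      (f := fun η => A * η ^ (1 - β) + B * η + C + E * η ^ (1 - γ))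
      (by fun_prop (disch := exact Or.inr (by linarith)))
      (by simpa [Real.zero_rpow (by linarith : 1 - β ≠ 0),
        Real.zero_rpow (by linarith : 1 - γ ≠ 0)])
    refine ⟨η, hη, ?_⟩
    have hfactor : η ^ (γ - 1) * (A * η ^ (1 - β) + B * η + C + E * η ^ (1 - γ)) =
        A * η ^ (γ - β) + B * η ^ γ + C * η ^ (γ - 1) + E := by
      have hβ : η ^ (γ - 1) * η ^ (1 - β) = η ^ (γ - β) := by
        rw [← Real.rpow_add hη]
        ring_nf
      have hγ : η ^ (γ - 1) * η = η ^ γ := by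
        rw [Real.rpow_sub_one hη.ne', div_mul_cancel₀ _ hη.ne']
      have hE : η ^ (γ - 1) * η ^ (1 - γ) = 1 := by
        rw [← Real.rpow_add hη, sub_add_sub_cancel', sub_self, Real.rpow_zero]
      linear_combination A * hβ + B * hγ + E * hE
    rw [wPoly_one_left hη, ← hfactor]
    exact mul_neg_of_pos_of_neg hκ (mul_neg_of_pos_of_neg (Real.rpow_pos_of_pos hη _) hneg)
  · have hE : E < 0 := sub_neg.2 (one_div_lt_one_div_of_lt (by linarith) (by linarith))
    obtain ⟨η, hη, hneg⟩ := exists_gt_lt_zero_of_continuousAt (a := 0)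
      (f := fun η => A * η ^ (γ - β) + B * η ^ γ + C * η ^ (γ - 1) + E)
      (by fun_prop (disch := exact Or.inr (by linarith)))
      (by simpa [Real.zero_rpow (by linarith : γ - β ≠ 0), Real.zero_rpow hγ.ne',
        Real.zero_rpow (by linarith : γ - 1 ≠ 0)])
    exact ⟨η, hη, (wPoly_one_left hη).trans_lt (mul_neg_of_pos_of_neg hκ hneg)⟩

theorem powerDiv_le_mul_powerDiv_of_le {a β γ x : ℝ} (hγ : 0 < γ) (hγ1 : γ ≠ 1) (hβ1 : β ≠ 1)
    (hγβ : γ ≤ β) (hβa : β ≤ a * γ) (hx : 0 < x) : powerDiv γ x ≤ a * powerDiv β x := by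
  refine le_of_mul_le_mul_left ?_ hγ
  calc γ * powerDiv γ x ≤ β * powerDiv β x := mul_powerDiv_le_mul_powerDiv hx hγ1 hβ1 hγβ
    _ ≤ a * γ * powerDiv β x := mul_le_mul_of_nonneg_right hβa (powerDiv_nonneg hx hβ1)
    _ = γ * (a * powerDiv β x) := by ring

theorem powerDiv_le_mul_powerDiv_of_lt_one {a β γ x : ℝ} (hγ0 : γ ≠ 0) (hγ1 : γ < 1)
    (hβ0 : β ≠ 0) (hβγ : β ≤ γ) (hβa : 1 - β ≤ a * (1 - γ)) (hx : 0 < x) :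
    powerDiv γ x ≤ a * powerDiv β x := by
  rw [powerDiv_eq_mul_powerDiv_inv γ hx, powerDiv_eq_mul_powerDiv_inv β hx, mul_left_comm]
  exact mul_le_mul_of_nonneg_left (powerDiv_le_mul_powerDiv_of_le (by linarith)
    (by simpa using hγ0) (by simpa using hβ0) (by linarith) hβa (inv_pos.2 hx)) hx.le

theorem powerDiv_le_mul_powerDiv_of_le_one {a β γ x : ℝ} (ha : 1 ≤ a) (hγ : 0 < γ)
    (hγ1 : γ ≠ 1) (hβ0 : β ≠ 0) (hβ1 : β ≠ 1) (hβa : β ≤ a * γ) (hx : 0 < x) (hx1 : x ≤ 1) :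
    powerDiv γ x ≤ a * powerDiv β x := by
  rcases le_total γ β with hγβ | hβγ
  · exact powerDiv_le_mul_powerDiv_of_le hγ hγ1 hβ1 hγβ hβa hx
  calc powerDiv γ x ≤ powerDiv β x :=
        powerDiv_le_powerDiv_of_le_one hβ0 hβ1 hγ.ne' hγ1 hβγ hx hx1
    _ ≤ a * powerDiv β x := le_mul_of_one_le_left (powerDiv_nonneg hx hβ1) ha

theorem powerDiv_le_mul_powerDiv_of_min_le {a β γ x : ℝ} (ha : 1 ≤ a) (hγ : 0 < γ)
    (hγ1 : γ ≠ 1) (hβ0 : β ≠ 0) (hβ1 : β ≠ 1) (hβa : β ≤ a * γ)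
    (hmin : min γ (a * (γ - 1) + 1) ≤ β) (hx : 0 < x) : powerDiv γ x ≤ a * powerDiv β x := by
  rcases le_or_gt γ β with hγβ | hβγ
  · exact powerDiv_le_mul_powerDiv_of_le hγ hγ1 hβ1 hγβ hβa hx
  have hβ' := (min_le_iff.1 hmin).resolve_left hβγ.not_ge
  have hγ1' : γ < 1 := by
    by_contra! hγ1'
    nlinarith [mul_le_mul_of_nonneg_right ha (sub_nonneg.2 hγ1')]
  exact powerDiv_le_mul_powerDiv_of_lt_one hγ.ne' hγ1' hβ0 hβγ.le (by linarith) hx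

theorem wPoly_nonneg_of_powerDiv_le {κ ν γ β δ η : ℝ} (hκ : 0 ≤ κ) (hγ0 : γ ≠ 0) (hγ1 : γ ≠ 1)
    (hβ0 : β ≠ 0) (hβ1 : β ≠ 1) (hδ : 0 < δ) (hη : 0 < η)
    (h : powerDiv γ (δ / η) ≤ 3 * (1 - ν) / (1 + ν) * powerDiv β (δ / η)) :
    0 ≤ wPoly κ ν γ β δ η := by
  rw [wPoly_eq_powerDiv hγ0 hγ1 hβ0 hβ1 hδ hη]
  exact mul_nonneg (div_nonneg hκ hδ.le) (add_nonneg (powerDiv_nonneg hδ hγ1)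
    (mul_nonneg (Real.rpow_pos_of_pos hη γ).le (sub_nonneg.2 h)))

/-- `ŵ ≥ 0` for `η ≥ δ > 0` (weak non-negative stored energy condition), and `ŵ ≥ 0`
on all of `(0,∞)²` (strong condition) iff
`β ≥ min(γ, 3γ(1−ν)/(1+ν) − 2(1−2ν)/(1+ν))`. -/
theorem wPoly_nonneg (κ ν γ β : ℝ) (hκ : 0 < κ) (hν : ν ∈ Ioc (-1 : ℝ) (1/2))
    (hγ : 0 < γ) (hγ1 : γ ≠ 1) (hβ0 : β ≠ 0) (hβ1 : β ≠ 1)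
    (hβν : β * (1 + ν) ≤ 3 * γ * (1 - ν)) :
    (∀ δ η : ℝ, 0 < δ → δ ≤ η → 0 ≤ wPoly κ ν γ β δ η) ∧
    ((∀ δ η : ℝ, 0 < δ → 0 < η → 0 ≤ wPoly κ ν γ β δ η) ↔
      min γ (3 * γ * (1 - ν) / (1 + ν) - 2 * (1 - 2 * ν) / (1 + ν)) ≤ β) := by
  obtain ⟨hν1, hν2⟩ := hν
  have h1ν : 0 < 1 + ν := by linarith
  have hmin : 3 * γ * (1 - ν) / (1 + ν) - 2 * (1 - 2 * ν) / (1 + ν) =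
      3 * (1 - ν) / (1 + ν) * (γ - 1) + 1 := by
    field_simp
    ring
  set a := 3 * (1 - ν) / (1 + ν)
  have ha : 1 ≤ a := by rw [le_div_iff₀ h1ν]; linarith
  have hβa : β ≤ a * γ := by rw [div_mul_eq_mul_div, le_div_iff₀ h1ν]; linarith
  have hnonneg : ∀ δ η : ℝ, 0 < δ → 0 < η → powerDiv γ (δ / η) ≤ a * powerDiv β (δ / η) →
      0 ≤ wPoly κ ν γ β δ η :=
    fun δ η hδ hη => wPoly_nonneg_of_powerDiv_le hκ.le hγ.ne' hγ1 hβ0 hβ1 hδ hη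
  rw [hmin]
  refine ⟨fun δ η hδ hδη => ?_, fun h => ?_, fun h δ η hδ hη => ?_⟩
  · have hη := hδ.trans_le hδη
    exact hnonneg δ η hδ hη (powerDiv_le_mul_powerDiv_of_le_one ha hγ hγ1 hβ0 hβ1 hβa
      (div_pos hδ hη) ((div_le_one hη).2 hδη))
  · by_contra! hlt
    obtain ⟨η, hη, hneg⟩ :=
      exists_wPoly_one_neg hκ hγ hγ1 (lt_min_iff.1 hlt).1 (lt_min_iff.1 hlt).2
    exact hneg.not_ge (h 1 η one_pos hη)
  · exact hnonneg δ η hδ hη (powerDiv_le_mul_powerDiv_of_min_le ha hγ hγ1 hβ0 hβ1 hβa h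
      (div_pos hδ hη))
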